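/- Let X be a real random variable whose cdf F is continuous, let G : ℝ → [0,1] be any cumulative distribution function with quantile function G^{-1}(u) := inf{x ∈ ℝ : G(x) ≥ u}, and let p ≥ 1. Then E[ |X − G^{-1}(F(X))|^p ] = ∫₀¹ |F^{-1}(u) − G^{-1}(u)|^p du, where both sides may simultaneously be +∞. In particular, the comonotonic rearrangement X_c := G^{-1}(F(X)) of X to the law G realises the quantile-based p-distance ∫₀¹ |F^{-1}(u) − G^{-1}(u)|^p du as an expectation over X. -/

import Mathlib

/-!
Since `F` is continuous, `F(X)` is uniformly distributed on `(0,1)`, and `F⁻¹(F(X)) = X` almost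
surely: `F⁻¹(F(x)) < x` forces `F` to be constant on an interval with rational points, and each of
these countably many levels is hit by `F(X)` with probability zero. So the left-hand side is the
integral of `|F⁻¹ - G⁻¹|^p` against the law of `F(X)`, which is Lebesgue measure on `(0,1)`;
monotonicity of the quantile functions provides the measurability this change of variables needs.
-/

open MeasureTheory Set Filter Topology

-- For a cdf `G` and `u ∉ (0,1)` the set is `ℝ` or empty, so the value is the junk `sInf = 0`.
noncomputable def quantile (G : ℝ → ℝ) (u : ℝ) : ℝ := sInf {x | u ≤ G x}

section Quantile

variable {G : ℝ → ℝ}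

lemma bddBelow_setOf_le_of_tendsto_atBot (hG : Monotone G) (h0 : Tendsto G atBot (𝓝 0))
    {u : ℝ} (hu : 0 < u) : BddBelow {x | u ≤ G x} := by
  obtain ⟨y, hy⟩ := (h0.eventually_lt_const hu).exists
  exact ⟨y, fun z hz => le_of_not_gt fun hzy => ((hG hzy.le).trans_lt hy).not_ge hz⟩

lemma bddAbove_setOf_le_of_tendsto_atTop (hG : Monotone G) (h1 : Tendsto G atTop (𝓝 1))
    {t : ℝ} (ht : t < 1) : BddAbove {x | G x ≤ t} := by
  obtain ⟨y, hy⟩ := (h1.eventually_const_lt ht).exists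
  exact ⟨y, fun z hz => le_of_not_gt fun hyz => (hy.trans_le (hG hyz.le)).not_ge hz⟩

lemma monotoneOn_quantile (hG : Monotone G) (h0 : Tendsto G atBot (𝓝 0))
    (h1 : Tendsto G atTop (𝓝 1)) : MonotoneOn (quantile G) (Ioo 0 1) := by
  intro u hu v hv huv
  refine csInf_le_csInf (bddBelow_setOf_le_of_tendsto_atBot hG h0 hu.1) ?_
    fun x hx => huv.trans hx
  obtain ⟨y, hy⟩ := (h1.eventually_const_lt hv.2).exists
  exact ⟨y, hy.le⟩

lemma aemeasurable_quantile (hG : Monotone G) (h0 : Tendsto G atBot (𝓝 0))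
    (h1 : Tendsto G atTop (𝓝 1)) : AEMeasurable (quantile G) (volume.restrict (Ioo 0 1)) :=
  aemeasurable_restrict_of_monotoneOn measurableSet_Ioo (monotoneOn_quantile hG h0 h1)

end Quantile

namespace ProbabilityTheory

variable {μ : Measure ℝ} [IsProbabilityMeasure μ]

/-- The sublevel set `{cdf μ ≤ t}` is a closed half-line, at whose endpoint the cdf takes the
value `t`. -/
lemma measure_cdf_le (hcont : Continuous (cdf μ)) {t : ℝ} (ht : t ∈ Ico 0 1) :
    μ {x | cdf μ x ≤ t} = ENNReal.ofReal t := by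
  set A := {x | cdf μ x ≤ t}
  rcases A.eq_empty_or_nonempty with hA | hA
  · have ht0 : t = 0 := by
      refine le_antisymm (not_lt.1 fun htpos => ?_) ht.1
      obtain ⟨y, hy⟩ := ((tendsto_cdf_atBot μ).eventually_lt_const htpos).exists
      exact hA.subset hy.le
    simp [hA, ht0]
  have hbdd := bddAbove_setOf_le_of_tendsto_atTop (monotone_cdf μ) (tendsto_cdf_atTop μ) ht.2
  set a := sSup A
  have haA : a ∈ A := (isClosed_le hcont continuous_const).csSup_mem hA hbdd
  have hA_eq : A = Iic a :=
    Subset.antisymm (fun x hx => le_csSup hbdd hx) fun x hx => (monotone_cdf μ hx).trans haA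
  have hcdf_a : cdf μ a = t := by
    refine le_antisymm haA ?_
    have hAc : Ioi a ⊆ {x | t ≤ cdf μ x} := fun x hx =>
      show t ≤ cdf μ x from le_of_not_ge fun hxt => (le_csSup hbdd hxt).not_gt hx
    exact (isClosed_le continuous_const hcont).closure_subset_iff.2 hAc
      (by rw [closure_Ioi]; exact self_mem_Ici)
  rw [hA_eq, ← ofReal_cdf, hcdf_a]

lemma map_cdf_eq_volume_restrict (hcont : Continuous (cdf μ)) :
    μ.map (cdf μ) = volume.restrict (Ioo 0 1) := by
  have hmeas : Measurable (cdf μ) := hcont.measurable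
  refine Measure.ext_of_Iic _ _ fun t => ?_
  have := Measure.isProbabilityMeasure_map (μ := μ) hmeas.aemeasurable
  rw [Measure.map_apply hmeas measurableSet_Iic, Measure.restrict_apply measurableSet_Iic]
  rcases lt_or_ge t 0 with ht0 | ht0
  · have hpre : cdf μ ⁻¹' Iic t = ∅ :=
      eq_empty_of_forall_notMem fun x hx => (ht0.trans_le (cdf_nonneg μ x)).not_ge hx
    have hint : Iic t ∩ Ioo 0 1 = ∅ :=
      eq_empty_of_forall_notMem fun x hx => (hx.1.trans ht0.le).not_gt hx.2.1
    simp [hpre, hint]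
  rcases lt_or_ge t 1 with ht1 | ht1
  · have hint : Iic t ∩ Ioo 0 1 = Ioc 0 t := by
      ext x; simp only [mem_inter_iff, mem_Iic, mem_Ioo, mem_Ioc]
      constructor
      · rintro ⟨hxt, hx0, -⟩; exact ⟨hx0, hxt⟩
      · rintro ⟨hx0, hxt⟩; exact ⟨hxt, hx0, hxt.trans_lt ht1⟩
    rw [hint, Real.volume_Ioc, sub_zero]
    exact measure_cdf_le hcont ⟨ht0, ht1⟩
  · have hpre : cdf μ ⁻¹' Iic t = univ :=
      eq_univ_of_forall fun x => (cdf_le_one μ x).trans ht1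
    rw [hpre, inter_eq_self_of_subset_right fun x hx => hx.2.le.trans ht1]
    simp

lemma ae_quantile_cdf (hcont : Continuous (cdf μ)) :
    ∀ᵐ x ∂μ, quantile (cdf μ) (cdf μ x) = x := by
  have hne (c : ℝ) : ∀ᵐ x ∂μ, cdf μ x ≠ c := by
    have hc : ∀ᵐ u ∂μ.map (cdf μ), u ≠ c := by
      rw [map_cdf_eq_volume_restrict hcont]
      exact Measure.ae_ne _ c
    exact ae_of_ae_map hcont.measurable.aemeasurable hc
  filter_upwards [hne 0, ae_all_iff.2 fun q : ℚ => hne (cdf μ q)] with x hx0 hxq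
  set S := {y | cdf μ x ≤ cdf μ y}
  have hbdd := bddBelow_setOf_le_of_tendsto_atBot (monotone_cdf μ) (tendsto_cdf_atBot μ)
    ((cdf_nonneg μ x).lt_of_ne' hx0)
  have hxS : x ∈ S := le_refl (cdf μ x)
  have hinfS : sInf S ∈ S := (isClosed_le continuous_const hcont).csInf_mem ⟨x, hxS⟩ hbdd
  refine (csInf_le hbdd hxS).antisymm (not_lt.1 fun hlt => ?_)
  obtain ⟨q, hq_gt, hq_lt⟩ := exists_rat_btwn hlt
  exact hxq q <| le_antisymm (hinfS.trans (monotone_cdf μ hq_gt.le)) (monotone_cdf μ hq_lt.le)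

end ProbabilityTheory

open ProbabilityTheory (cdf cdf_eq_real monotone_cdf tendsto_cdf_atBot tendsto_cdf_atTop
  map_cdf_eq_volume_restrict ae_quantile_cdf)

theorem comonotonic_transport_general
    {Ω : Type*} [MeasurableSpace Ω] (ℙ : Measure Ω) [IsProbabilityMeasure ℙ]
    (X : Ω → ℝ) (hXmeas : Measurable X)
    -- F : the cdf of X, assumed continuous
    (F : ℝ → ℝ) (hF : ∀ x, F x = (ℙ {ω | X ω ≤ x}).toReal) (hFcont : Continuous F)
    -- G : any cumulative distribution function on ℝ
    (G : ℝ → ℝ) (hGmono : Monotone G)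
    (hG0 : Filter.Tendsto G Filter.atBot (nhds 0))
    (hG1 : Filter.Tendsto G Filter.atTop (nhds 1))
    -- quantile functions (generalised inverses)
    (Finv Ginv : ℝ → ℝ)
    (hFinv : ∀ u, Finv u = sInf {x : ℝ | u ≤ F x})
    (hGinv : ∀ u, Ginv u = sInf {x : ℝ | u ≤ G x})
    (p : ℝ) :
    ∫⁻ ω, ENNReal.ofReal (|X ω - Ginv (F (X ω))| ^ p) ∂ℙ
      = ∫⁻ u in Ioo (0:ℝ) 1, ENNReal.ofReal (|Finv u - Ginv u| ^ p) := by
  set μ := ℙ.map X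
  have : IsProbabilityMeasure μ := Measure.isProbabilityMeasure_map hXmeas.aemeasurable
  have hFμ : F = cdf μ := funext fun x => by
    rw [hF, cdf_eq_real, map_measureReal_apply hXmeas measurableSet_Iic]; rfl
  subst hFμ
  obtain rfl : Finv = quantile (cdf μ) := funext hFinv
  obtain rfl : Ginv = quantile G := funext hGinv
  have hmap : ℙ.map (cdf μ ∘ X) = volume.restrict (Ioo 0 1) := by
    rw [← Measure.map_map hFcont.measurable hXmeas, map_cdf_eq_volume_restrict hFcont]
  have hφ : AEMeasurable (fun u => ENNReal.ofReal (|quantile (cdf μ) u - quantile G u| ^ p))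
      (ℙ.map (cdf μ ∘ X)) := by
    have hpow : Measurable fun y : ℝ => ENNReal.ofReal (|y| ^ p) := by fun_prop
    rw [hmap]
    exact hpow.comp_aemeasurable <|
      (aemeasurable_quantile (monotone_cdf μ) (tendsto_cdf_atBot μ) (tendsto_cdf_atTop μ)).sub
        (aemeasurable_quantile hGmono hG0 hG1)
  calc ∫⁻ ω, ENNReal.ofReal (|X ω - quantile G (cdf μ (X ω))| ^ p) ∂ℙ
      = ∫⁻ ω, ENNReal.ofReal
          (|quantile (cdf μ) (cdf μ (X ω)) - quantile G (cdf μ (X ω))| ^ p) ∂ℙ := by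
        refine lintegral_congr_ae ?_
        filter_upwards [ae_of_ae_map hXmeas.aemeasurable (ae_quantile_cdf hFcont)] with ω hω
        rw [hω]
    _ = ∫⁻ u, ENNReal.ofReal (|quantile (cdf μ) u - quantile G u| ^ p) ∂(ℙ.map (cdf μ ∘ X)) :=
        (lintegral_map' hφ (hFcont.measurable.comp hXmeas).aemeasurable).symm
    _ = _ := by rw [hmap]

/-- The comonotonic rearrangement `X_c := G⁻¹(F(X))` of `X` to the law `G`
realises the quantile-based `p`-distance:
`E[|X - G⁻¹(F(X))|^p] = ∫₀¹ |F⁻¹(u) - G⁻¹(u)|^p du`,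
where both sides may simultaneously be `+∞` (hence stated with `∫⁻`). -/
theorem comonotonic_transport
    {Ω : Type*} [MeasurableSpace Ω] (ℙ : Measure Ω) [IsProbabilityMeasure ℙ]
    (X : Ω → ℝ) (hXmeas : Measurable X)
    -- F : the cdf of X, assumed continuous
    (F : ℝ → ℝ) (hF : ∀ x, F x = (ℙ {ω | X ω ≤ x}).toReal) (hFcont : Continuous F)
    -- G : any cumulative distribution function on ℝ
    (G : ℝ → ℝ) (hGmono : Monotone G)
    (hGrc : ∀ x, ContinuousWithinAt G (Ici x) x)
    (hGrange : ∀ x, G x ∈ Icc (0:ℝ) 1)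
    (hG0 : Filter.Tendsto G Filter.atBot (nhds 0))
    (hG1 : Filter.Tendsto G Filter.atTop (nhds 1))
    -- quantile functions (generalised inverses)
    (Finv Ginv : ℝ → ℝ)
    (hFinv : ∀ u, Finv u = sInf {x : ℝ | u ≤ F x})
    (hGinv : ∀ u, Ginv u = sInf {x : ℝ | u ≤ G x})
    (p : ℝ) (hp : 1 ≤ p) :
    ∫⁻ ω, ENNReal.ofReal (|X ω - Ginv (F (X ω))| ^ p) ∂ℙ
      = ∫⁻ u in Ioo (0:ℝ) 1, ENNReal.ofReal (|Finv u - Ginv u| ^ p) :=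
  comonotonic_transport_general ℙ X hXmeas F hF hFcont G hGmono hG0 hG1 Finv Ginv hFinv hGinv p
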